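/- arXiv:2504.07186 — 3 statements merged into one kernel-verified Lean document; each statement's English description precedes it below -/
import Mathlib

section
/- If G is a maximal outerplanar graph of order n ≥ 4 that has exactly k internal triangles, then G has exactly k + 2 vertices of degree 2. -/
open SimpleGraph

/-- `G` is (the representation of) a maximal outerplanar graph on the convex polygon
`0, 1, …, n-1`: it contains all outer edges `{i, (i+1) mod n}`, no two of its edges
cross, and it has exactly `2n - 3` edges. -/
def IsMop {n : ℕ} [NeZero n] (G : SimpleGraph (Fin n)) : Prop :=
  (∀ i : Fin n, G.Adj i (i + 1)) ∧
  (∀ a b c d : Fin n, a < b → b < c → c < d → G.Adj a c → ¬ G.Adj b d) ∧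
  G.edgeSet.ncard = 2 * n - 3

/-- An edge of `G` that is not an outer edge of the polygon. -/
def IsDiagonal {n : ℕ} [NeZero n] (G : SimpleGraph (Fin n)) (u v : Fin n) : Prop :=
  G.Adj u v ∧ v ≠ u + 1 ∧ u ≠ v + 1

/-- Three pairwise adjacent vertices all of whose connecting edges are diagonals. -/
def IsInternalTriangle {n : ℕ} [NeZero n] (G : SimpleGraph (Fin n)) (a b c : Fin n) : Prop :=
  IsDiagonal G a b ∧ IsDiagonal G b c ∧ IsDiagonal G a c

/-- The number of vertices of `G` having degree `2`. -/
noncomputable def degTwoCount {n : ℕ} (G : SimpleGraph (Fin n)) : ℕ :=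
  {v : Fin n | (G.neighborSet v).ncard = 2}.ncard

/-- `D` is a dominating set of `G`. -/
def IsDomSet {V : Type*} (G : SimpleGraph V) (D : Set V) : Prop :=
  ∀ v ∉ D, ∃ u ∈ D, G.Adj u v

/-- `D` is a disjunctive dominating set (2DD-set) of `G`: every vertex outside `D`
has a neighbor in `D` or at least two vertices of `D` at distance exactly `2`. -/
def IsDisjDomSet {V : Type*} (G : SimpleGraph V) (D : Set V) : Prop :=
  ∀ v ∉ D, (∃ u ∈ D, G.Adj u v) ∨
    ∃ u ∈ D, ∃ w ∈ D, u ≠ w ∧ G.dist u v = 2 ∧ G.dist w v = 2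

/-- The domination number `γ(G)`. -/
noncomputable def domNum {V : Type*} [Fintype V] (G : SimpleGraph V) : ℕ :=
  sInf {k : ℕ | ∃ D : Set V, IsDomSet G D ∧ D.ncard = k}

/-- The disjunctive domination number `γ₂ᵈ(G)`. -/
noncomputable def disjDomNum {V : Type*} [Fintype V] (G : SimpleGraph V) : ℕ :=
  sInf {k : ℕ | ∃ D : Set V, IsDisjDomSet G D ∧ D.ncard = k}

/-!
A triangulated polygon `a, a + 1, …, b` with `b - a ≥ 2` has a unique triangle `a c b` on the
side `ab`, and it splits the polygon into the triangulated polygons `a, …, c` and `c, …, b`.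
Induction along this splitting shows that the number of degree-2 vertices strictly between `a`
and `b` is one more than the number of triangles of `a, …, b` none of whose sides joins two
consecutive vertices: this is "leaves = branching nodes + 1" for the binary tree of triangles
rooted at `ab`. Splitting the whole polygon once at the apex `c` of the outer edge `0 (n - 1)`
gives the theorem: the internal triangles are exactly such triangles of the two halves, `c` has
degree at least 3, and `0` (resp. `n - 1`) has degree 2 exactly when its half is a single edge.
-/

open Finset
open scoped Classical

variable {n : ℕ} {G : SimpleGraph (Fin n)} {a b c : Fin n}

def ContainsOuterCycle [NeZero n] (G : SimpleGraph (Fin n)) : Prop :=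
  ∀ i : Fin n, G.Adj i (i + 1)

def NoCrossing (G : SimpleGraph (Fin n)) : Prop :=
  ∀ a b c d : Fin n, a < b → b < c → c < d → G.Adj a c → ¬ G.Adj b d

def lastVertex [NeZero n] : Fin n := ⟨n - 1, Nat.sub_one_lt (NeZero.ne n)⟩

@[simp] theorem val_lastVertex [NeZero n] : (lastVertex : Fin n).val = n - 1 := rfl

theorem le_lastVertex [NeZero n] (v : Fin n) : v ≤ lastVertex := by
  rw [Fin.le_def, val_lastVertex]
  omega

theorem Fin.val_add_one_eq_ite [NeZero n] (v : Fin n) :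
    (v + 1).val = if v.val + 1 = n then 0 else v.val + 1 := by
  obtain ⟨m, rfl⟩ : ∃ m, n = m + 1 :=
    ⟨n - 1, (Nat.succ_pred_eq_of_pos (NeZero.pos n)).symm⟩
  rw [Fin.val_add_one]
  simp only [Fin.ext_iff, Fin.val_last]
  split_ifs <;> omega

theorem ContainsOuterCycle.adj_of_val_add_one [NeZero n] (hout : ContainsOuterCycle G)
    {u v : Fin n} (h : u.val + 1 = v.val) : G.Adj u v := by
  convert hout u
  rw [Fin.ext_iff, Fin.val_add_one_eq_ite, if_neg (by omega)]
  exact h.symm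

theorem ContainsOuterCycle.adj_lastVertex_zero [NeZero n] (hout : ContainsOuterCycle G) :
    G.Adj lastVertex 0 := by
  convert hout lastVertex
  rw [Fin.ext_iff, Fin.val_add_one_eq_ite, if_pos (by simp [Nat.sub_add_cancel NeZero.one_le]),
    Fin.val_zero]

theorem NoCrossing.mem_Icc_of_adj (hcr : NoCrossing G) {u v : Fin n} (hab : G.Adj a b)
    (hav : a < v) (hvb : v < b) (hvu : G.Adj v u) : a ≤ u ∧ u ≤ b := by
  by_contra h
  rcases not_and_or.1 h with h | h
  · exact hcr u a v b (by omega) hav hvb hvu.symm hab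
  · exact hcr a v b u hav hvb (by omega) hab hvu

theorem NoCrossing.eq_of_adj_of_adj (hcr : NoCrossing G) (hac : a < c) (hcb : c < b)
    (hac' : G.Adj a c) (hcb' : G.Adj c b) {y : Fin n} (hay : a < y) (hyb : y < b)
    (hay' : G.Adj a y) (hyb' : G.Adj y b) : y = c := by
  rcases lt_trichotomy y c with h | h | h
  · exact absurd hyb' (hcr a y c b hay h hcb hac')
  · exact h
  · exact absurd hcb' (hcr a c y b hac h hyb hay')

theorem NoCrossing.edge_mem_sides (hcr : NoCrossing G) (hac : a < c)
    (hac' : G.Adj a c) (hcb' : G.Adj c b) {u v : Fin n} (hau : a ≤ u) (huv : u < v)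
    (hvb : v ≤ b) (h : G.Adj u v) : (u = a ∧ v = b) ∨ v ≤ c ∨ c ≤ u := by
  by_contra! hne
  obtain ⟨hne, hcv, huc⟩ := hne
  rcases eq_or_lt_of_le hau with rfl | hau
  · exact hcr a c v b hac hcv (lt_of_le_of_ne hvb (hne rfl)) h hcb'
  · exact hcr a u c v hau huc hcv hac' h

noncomputable def intervalEdges (G : SimpleGraph (Fin n)) (a b : Fin n) : Finset (Fin n × Fin n) :=
  {p | a ≤ p.1 ∧ p.1 < p.2 ∧ p.2 ≤ b ∧ G.Adj p.1 p.2}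

@[simp] theorem mem_intervalEdges {p : Fin n × Fin n} :
    p ∈ intervalEdges G a b ↔ a ≤ p.1 ∧ p.1 < p.2 ∧ p.2 ≤ b ∧ G.Adj p.1 p.2 := by
  simp [intervalEdges]

theorem disjoint_intervalEdges : Disjoint (intervalEdges G a c) (intervalEdges G c b) := by
  rw [Finset.disjoint_left]
  rintro ⟨u, v⟩
  simp only [mem_intervalEdges]
  omega

theorem intervalEdges_union_subset (hac : a ≤ c) (hcb : c ≤ b) :
    intervalEdges G a c ∪ intervalEdges G c b ⊆ intervalEdges G a b := by
  rintro ⟨u, v⟩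
  simp only [mem_union, mem_intervalEdges]
  rintro (⟨h1, h2, h3, h4⟩ | ⟨h1, h2, h3, h4⟩) <;> exact ⟨by omega, h2, by omega, h4⟩

theorem ContainsOuterCycle.exists_first_adj [NeZero n] (hout : ContainsOuterCycle G)
    (h : a.val + 2 ≤ b.val) :
    ∃ c, a < c ∧ c < b ∧ G.Adj c b ∧ ∀ u, a < u → u < c → ¬ G.Adj u b := by
  let s : Finset (Fin n) := {u | a < u ∧ u < b ∧ G.Adj u b}
  have hmem {u : Fin n} : u ∈ s ↔ a < u ∧ u < b ∧ G.Adj u b := by simp [s]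
  have hs : s.Nonempty := ⟨⟨b.val - 1, by omega⟩, hmem.2
    ⟨Fin.lt_def.2 (show a.val < b.val - 1 by omega),
      Fin.lt_def.2 (show b.val - 1 < b.val by omega),
      hout.adj_of_val_add_one (u := ⟨b.val - 1, by omega⟩) (by simp; omega)⟩⟩
  obtain ⟨hac, hcb, hadj⟩ := hmem.1 (s.min'_mem hs)
  refine ⟨s.min' hs, hac, hcb, hadj, fun u hau huc hub => ?_⟩
  exact (s.min'_le u (hmem.2 ⟨hau, huc.trans hcb, hub⟩)).not_gt huc

theorem NoCrossing.intervalEdges_subset (hcr : NoCrossing G) (hcb : c < b)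
    (hcb' : G.Adj c b) (hmin : ∀ u, a < u → u < c → ¬ G.Adj u b) :
    intervalEdges G a b ⊆ intervalEdges G a c ∪ intervalEdges G c b ∪ {(a, b)} := by
  rintro ⟨u, v⟩ huv
  simp only [mem_intervalEdges, mem_union, mem_singleton, Prod.mk.injEq] at huv ⊢
  obtain ⟨hau, huv, hvb, h⟩ := huv
  by_cases hvc : v ≤ c
  · exact Or.inl (Or.inl ⟨hau, huv, hvc, h⟩)
  by_cases hcu : c ≤ u
  · exact Or.inl (Or.inr ⟨hcu, huv, hvb, h⟩)
  push Not at hvc hcu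
  rcases eq_or_lt_of_le hvb with rfl | hvb
  · rcases eq_or_lt_of_le hau with rfl | hau
    · exact Or.inr ⟨rfl, rfl⟩
    · exact absurd h (hmin u hau hcu)
  · exact absurd hcb' (hcr u c v b hcu hvc hvb h)

theorem NoCrossing.card_intervalEdges_le_add (hcr : NoCrossing G) (hcb : c < b)
    (hcb' : G.Adj c b) (hmin : ∀ u, a < u → u < c → ¬ G.Adj u b) :
    #(intervalEdges G a b) ≤ #(intervalEdges G a c) + #(intervalEdges G c b) + 1 :=
  (card_le_card (hcr.intervalEdges_subset hcb hcb' hmin)).trans <|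
    (card_union_le _ _).trans (by simpa using card_union_le _ _)

theorem NoCrossing.card_intervalEdges_le [NeZero n] (hcr : NoCrossing G)
    (hout : ContainsOuterCycle G) {a b : Fin n} (hab : a < b) :
    #(intervalEdges G a b) ≤ 2 * (b.val - a.val) - 1 := by
  by_cases h : a.val + 2 ≤ b.val
  · obtain ⟨c, hac, hcb, hcb', hmin⟩ := hout.exists_first_adj h
    have hl := hcr.card_intervalEdges_le hout hac
    have hr := hcr.card_intervalEdges_le hout hcb
    have := hcr.card_intervalEdges_le_add hcb hcb' hmin
    omega
  · calc #(intervalEdges G a b) ≤ #{(a, b)} := card_le_card fun p hp => by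
          simp only [mem_intervalEdges] at hp
          simp only [mem_singleton, Prod.ext_iff]
          omega
      _ ≤ 2 * (b.val - a.val) - 1 := by simp; omega
termination_by b.val - a.val

/-- The polygon `a, a + 1, …, b` is triangulated by `G`: it carries the maximal number
`2 (b - a) - 1` of non-crossing edges. -/
def IsTriangulated (G : SimpleGraph (Fin n)) (a b : Fin n) : Prop :=
  #(intervalEdges G a b) = 2 * (b.val - a.val) - 1

theorem IsTriangulated.adj_and_split [NeZero n] (ht : IsTriangulated G a b) (hcr : NoCrossing G)
    (hout : ContainsOuterCycle G) (h : a.val + 2 ≤ b.val) :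
    G.Adj a b ∧ ∃ c, a < c ∧ c < b ∧ G.Adj c b ∧ IsTriangulated G a c ∧
      IsTriangulated G c b := by
  -- tightness makes `#ab ≤ #ac + #cb + 1 ≤ (2 (c - a) - 1) + (2 (b - c) - 1) + 1 = #ab` tight
  obtain ⟨c, hac, hcb, hcb', hmin⟩ := hout.exists_first_adj h
  have hsub := hcr.intervalEdges_subset hcb hcb' hmin
  have hle := hcr.card_intervalEdges_le_add hcb hcb' hmin
  have hl := hcr.card_intervalEdges_le hout hac
  have hr := hcr.card_intervalEdges_le hout hcb
  have hsides : #(intervalEdges G a c) + #(intervalEdges G c b) ≤ #(intervalEdges G a b) := by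
    rw [← card_union_of_disjoint disjoint_intervalEdges]
    exact card_le_card (intervalEdges_union_subset hac.le hcb.le)
  have hab : G.Adj a b := by
    by_contra hab
    have : intervalEdges G a b ⊆ intervalEdges G a c ∪ intervalEdges G c b := fun p hp => by
      rcases mem_union.1 (hsub hp) with h | h
      · exact h
      · rw [mem_singleton] at h
        subst h
        exact absurd (mem_intervalEdges.1 hp).2.2.2 hab
    have := (card_le_card this).trans (card_union_le _ _)
    unfold IsTriangulated at ht
    omega
  unfold IsTriangulated at ht ⊢
  exact ⟨hab, c, hac, hcb, hcb', by omega, by omega⟩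

theorem IsTriangulated.adj [NeZero n] (ht : IsTriangulated G a b) (hcr : NoCrossing G)
    (hout : ContainsOuterCycle G) (hab : a < b) : G.Adj a b := by
  by_cases h : a.val + 2 ≤ b.val
  · exact (ht.adj_and_split hcr hout h).1
  · exact hout.adj_of_val_add_one (by omega)

theorem IsTriangulated.exists_apex [NeZero n] (ht : IsTriangulated G a b) (hcr : NoCrossing G)
    (hout : ContainsOuterCycle G) (h : a.val + 2 ≤ b.val) :
    ∃ c, a < c ∧ c < b ∧ G.Adj a c ∧ G.Adj c b ∧ IsTriangulated G a c ∧
      IsTriangulated G c b := by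
  obtain ⟨-, c, hac, hcb, hcb', htl, htr⟩ := ht.adj_and_split hcr hout h
  exact ⟨c, hac, hcb, htl.adj hcr hout hac, hcb', htl, htr⟩

theorem card_intervalEdges_univ [NeZero n] :
    #(intervalEdges G 0 lastVertex) = G.edgeSet.ncard := by
  rw [← G.coe_edgeFinset, Set.ncard_coe_finset]
  refine card_bij (fun p _ => s(p.1, p.2)) ?_ ?_ ?_
  · rintro ⟨u, v⟩ h
    simpa using (mem_intervalEdges.1 h).2.2.2
  · rintro ⟨u, v⟩ h ⟨u', v'⟩ h' heq
    simp only [mem_intervalEdges] at h h'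
    simp only [Sym2.eq, Sym2.rel_iff', Prod.mk.injEq, Prod.swap_prod_mk] at heq
    rcases heq with heq | ⟨rfl, rfl⟩
    · rw [heq.1, heq.2]
    · omega
  · intro e he
    induction e using Sym2.ind with
    | h u v =>
      rw [mem_edgeFinset, mem_edgeSet] at he
      rcases lt_or_gt_of_ne he.ne with huv | hvu
      · exact ⟨(u, v), mem_intervalEdges.2 ⟨Fin.zero_le u, huv, le_lastVertex v, he⟩, rfl⟩
      · exact ⟨(v, u), mem_intervalEdges.2 ⟨Fin.zero_le v, hvu, le_lastVertex u, he.symm⟩,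
          Sym2.eq_swap⟩

theorem isTriangulated_univ [NeZero n] (hcount : G.edgeSet.ncard = 2 * n - 3) :
    IsTriangulated G 0 lastVertex := by
  rw [IsTriangulated, card_intervalEdges_univ, hcount, val_lastVertex, Fin.val_zero]
  omega

theorem ncard_neighborSet_eq_two {V : Type*} {H : SimpleGraph V} {v x y : V} (hxy : x ≠ y)
    (h : ∀ u, H.Adj v u ↔ u = x ∨ u = y) : (H.neighborSet v).ncard = 2 := by
  have : H.neighborSet v = {x, y} := by
    ext u
    simp [h]
  rw [this, Set.ncard_pair hxy]

theorem ncard_neighborSet_ne_two {V : Type*} [Finite V] {H : SimpleGraph V} {v x y z : V}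
    (hx : H.Adj v x) (hy : H.Adj v y) (hz : H.Adj v z) (hxy : x ≠ y) (hxz : x ≠ z)
    (hyz : y ≠ z) : (H.neighborSet v).ncard ≠ 2 :=
  ((Set.two_lt_ncard_iff (Set.toFinite _)).2 ⟨x, y, z, hx, hy, hz, hxy, hxz, hyz⟩).ne'

noncomputable def degTwoBetween (G : SimpleGraph (Fin n)) (a b : Fin n) : ℕ :=
  #{v ∈ Ioo a b | (G.neighborSet v).ncard = 2}

theorem degTwoBetween_eq_add (hac : a < c) (hcb : c < b) :
    degTwoBetween G a b = degTwoBetween G a c + degTwoBetween G c b +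
      if (G.neighborSet c).ncard = 2 then 1 else 0 := by
  have : Ioo a b = Ioo a c ∪ insert c (Ioo c b) := by
    ext v
    simp only [mem_Ioo, mem_union, mem_insert]
    omega
  have hdisj : Disjoint (Ioo a c) (insert c (Ioo c b)) := by
    simp only [Finset.disjoint_left, mem_Ioo, mem_insert]
    omega
  rw [degTwoBetween, this, filter_union, card_union_of_disjoint (disjoint_filter_filter hdisj),
    filter_insert]
  split_ifs <;> simp [degTwoBetween, add_assoc]

theorem degTwoCount_eq_degTwoBetween_add [NeZero n] (hn : 2 ≤ n) :
    degTwoCount G = degTwoBetween G 0 lastVertex +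
      (if (G.neighborSet 0).ncard = 2 then 1 else 0) +
      if (G.neighborSet lastVertex).ncard = 2 then 1 else 0 := by
  have : (univ : Finset (Fin n)) = insert 0 (insert lastVertex (Ioo 0 lastVertex)) := by
    ext v
    simp only [mem_univ, mem_insert, mem_Ioo, true_iff, Fin.ext_iff, Fin.lt_def,
      val_lastVertex, Fin.val_zero]
    omega
  have h0 : (0 : Fin n) ≠ lastVertex := by
    simp only [ne_eq, Fin.ext_iff, val_lastVertex, Fin.val_zero]
    omega
  rw [degTwoCount, Set.ncard_eq_toFinset_card', Set.toFinset_ofPred, this, filter_insert,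
    filter_insert]
  split_ifs <;> simp [degTwoBetween, h0, add_assoc]

theorem ncard_neighborSet_apex_eq_two_iff [NeZero n] (hcr : NoCrossing G)
    (hout : ContainsOuterCycle G) (hac : a < c) (hcb : c < b) (hab' : G.Adj a b)
    (hac' : G.Adj a c) (hcb' : G.Adj c b) :
    (G.neighborSet c).ncard = 2 ↔ c.val = a.val + 1 ∧ b.val = c.val + 1 := by
  constructor
  · intro h2
    by_contra hne
    rcases not_and_or.1 hne with h | h
    · refine ncard_neighborSet_ne_two hac'.symm hcb'
        (hout.adj_of_val_add_one (u := ⟨c.val - 1, by omega⟩) (by simp; omega)).symm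
        ?_ ?_ ?_ h2 <;> simp only [ne_eq, Fin.ext_iff] <;> omega
    · refine ncard_neighborSet_ne_two hac'.symm hcb'
        (hout.adj_of_val_add_one (v := ⟨c.val + 1, by omega⟩) rfl)
        ?_ ?_ ?_ h2 <;> simp only [ne_eq, Fin.ext_iff] <;> omega
  · rintro ⟨h1, h2⟩
    refine ncard_neighborSet_eq_two hab'.ne fun u => ⟨fun hu => ?_, ?_⟩
    · have := hcr.mem_Icc_of_adj hab' hac hcb hu
      have := hu.ne
      omega
    · rintro (rfl | rfl)
      exacts [hac'.symm, hcb']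

theorem ncard_neighborSet_zero_eq_two_iff [NeZero n] (hcr : NoCrossing G)
    (hout : ContainsOuterCycle G) (hc : 0 < c) (hcl : c < lastVertex)
    (hc' : G.Adj 0 c) (hcl' : G.Adj c lastVertex) :
    (G.neighborSet 0).ncard = 2 ↔ c.val = 1 := by
  have hl : G.Adj 0 lastVertex := hout.adj_lastVertex_zero.symm
  constructor
  · intro h2
    by_contra hne
    refine ncard_neighborSet_ne_two (hout.adj_of_val_add_one (v := ⟨1, by omega⟩) (by simp))
      hc' hl ?_ ?_ ?_ h2 <;> simp only [ne_eq, Fin.ext_iff] <;> omega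
  · intro h1
    refine ncard_neighborSet_eq_two hcl.ne fun u => ⟨fun hu => ?_, ?_⟩
    · by_contra! hne
      have := hu.ne
      have := le_lastVertex u
      exact hcr 0 c u lastVertex hc (by omega) (by omega) hu hcl'
    · rintro (rfl | rfl)
      exacts [hc', hl]

theorem ncard_neighborSet_lastVertex_eq_two_iff [NeZero n] (hcr : NoCrossing G)
    (hout : ContainsOuterCycle G) (hc : 0 < c) (hcl : c < lastVertex)
    (hc' : G.Adj 0 c) (hcl' : G.Adj c lastVertex) :
    (G.neighborSet lastVertex).ncard = 2 ↔ c.val + 2 = n := by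
  have hl : G.Adj lastVertex 0 := hout.adj_lastVertex_zero
  have := val_lastVertex (n := n)
  have := Fin.val_zero n
  constructor
  · intro h2
    by_contra hne
    refine ncard_neighborSet_ne_two
      (hout.adj_of_val_add_one (u := ⟨n - 2, by omega⟩) (v := lastVertex)
        (show n - 2 + 1 = n - 1 by omega)).symm
      hcl'.symm hl ?_ ?_ ?_ h2 <;> simp only [ne_eq, Fin.ext_iff] <;> omega
  · intro h1
    refine ncard_neighborSet_eq_two hc.ne' fun u => ⟨fun hu => ?_, ?_⟩
    · by_contra! hne
      have := hu.ne
      have := le_lastVertex u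
      exact hcr 0 u c lastVertex (by omega) (by omega) hcl hc' hu.symm
    · rintro (rfl | rfl)
      exacts [hcl'.symm, hl]

def IsGappedTriangle (G : SimpleGraph (Fin n)) (p q r : Fin n) : Prop :=
  p.val + 2 ≤ q.val ∧ q.val + 2 ≤ r.val ∧ G.Adj p q ∧ G.Adj q r ∧ G.Adj p r

noncomputable def gappedTriangles (G : SimpleGraph (Fin n)) (a b : Fin n) :
    Finset (Fin n × Fin n × Fin n) :=
  {t | a ≤ t.1 ∧ t.2.2 ≤ b ∧ IsGappedTriangle G t.1 t.2.1 t.2.2}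

@[simp] theorem mem_gappedTriangles {t : Fin n × Fin n × Fin n} :
    t ∈ gappedTriangles G a b ↔
      a ≤ t.1 ∧ t.2.2 ≤ b ∧ IsGappedTriangle G t.1 t.2.1 t.2.2 := by
  simp [gappedTriangles]

theorem gappedTriangles_eq_empty (h : b.val ≤ a.val + 1) : gappedTriangles G a b = ∅ := by
  ext ⟨p, q, r⟩
  simp only [mem_gappedTriangles, IsGappedTriangle, notMem_empty, iff_false]
  omega

theorem disjoint_gappedTriangles : Disjoint (gappedTriangles G a c) (gappedTriangles G c b) := by
  rw [Finset.disjoint_left]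
  rintro ⟨p, q, r⟩
  simp only [mem_gappedTriangles, IsGappedTriangle]
  omega

theorem NoCrossing.gappedTriangle_mem_sides (hcr : NoCrossing G) (hac : a < c) (hcb : c < b)
    (hac' : G.Adj a c) (hcb' : G.Adj c b) {p q r : Fin n} (hap : a ≤ p) (hrb : r ≤ b)
    (ht : IsGappedTriangle G p q r) : (p = a ∧ q = c ∧ r = b) ∨ r ≤ c ∨ c ≤ p := by
  obtain ⟨hpq, hqr, h1, h2, h3⟩ := ht
  rcases hcr.edge_mem_sides hac hac' hcb' hap (by omega) hrb h3 with ⟨rfl, rfl⟩ | h | h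
  · exact Or.inl ⟨rfl, hcr.eq_of_adj_of_adj hac hcb hac' hcb' (by omega) (by omega) h1 h2, rfl⟩
  · exact Or.inr (Or.inl h)
  · exact Or.inr (Or.inr h)

theorem NoCrossing.filter_gappedTriangles_eq_union (hcr : NoCrossing G) (hac : a < c)
    (hcb : c < b) (hac' : G.Adj a c) (hcb' : G.Adj c b) :
    {t ∈ gappedTriangles G a b | ¬(t.1 = a ∧ t.2.2 = b)} =
      gappedTriangles G a c ∪ gappedTriangles G c b := by
  ext ⟨p, q, r⟩
  simp only [mem_filter, mem_union, mem_gappedTriangles]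
  constructor
  · rintro ⟨⟨hap, hrb, ht⟩, hne⟩
    rcases hcr.gappedTriangle_mem_sides hac hcb hac' hcb' hap hrb ht with ⟨rfl, -, rfl⟩ | h | h
    · exact absurd ⟨rfl, rfl⟩ hne
    · exact Or.inl ⟨hap, h, ht⟩
    · exact Or.inr ⟨h, hrb, ht⟩
  · rintro (⟨hap, hrc, ht⟩ | ⟨hcp, hrb, ht⟩) <;>
      exact ⟨⟨by omega, by omega, ht⟩, by have := ht.1; have := ht.2.1; omega⟩

theorem NoCrossing.card_filter_gappedTriangles_apex (hcr : NoCrossing G) (hac : a < c)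
    (hcb : c < b) (hac' : G.Adj a c) (hcb' : G.Adj c b) :
    #{t ∈ gappedTriangles G a b | t.1 = a ∧ t.2.2 = b} =
      if IsGappedTriangle G a c b then 1 else 0 := by
  have hq {q : Fin n} (ht : IsGappedTriangle G a q b) : q = c :=
    hcr.eq_of_adj_of_adj hac hcb hac' hcb' (by have := ht.1; omega) (by have := ht.2.1; omega)
      ht.2.2.1 ht.2.2.2.1
  split_ifs with h
  · rw [card_eq_one]
    refine ⟨(a, c, b), ?_⟩
    ext ⟨p, q, r⟩
    simp only [mem_filter, mem_gappedTriangles, mem_singleton, Prod.mk.injEq]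
    constructor
    · rintro ⟨⟨-, -, ht⟩, rfl, rfl⟩
      exact ⟨rfl, hq ht, rfl⟩
    · rintro ⟨rfl, rfl, rfl⟩
      exact ⟨⟨le_rfl, le_rfl, h⟩, rfl, rfl⟩
  · rw [card_eq_zero, filter_eq_empty_iff]
    rintro ⟨p, q, r⟩ hmem ⟨rfl, rfl⟩
    obtain ⟨-, -, ht⟩ := mem_gappedTriangles.1 hmem
    exact h (hq ht ▸ ht)

theorem NoCrossing.card_gappedTriangles_eq_add (hcr : NoCrossing G) (hac : a < c)
    (hcb : c < b) (hac' : G.Adj a c) (hcb' : G.Adj c b) :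
    #(gappedTriangles G a b) = #(gappedTriangles G a c) + #(gappedTriangles G c b) +
      if IsGappedTriangle G a c b then 1 else 0 := by
  rw [← card_filter_add_card_filter_not (s := gappedTriangles G a b)
      (fun t => t.1 = a ∧ t.2.2 = b), hcr.card_filter_gappedTriangles_apex hac hcb hac' hcb',
    hcr.filter_gappedTriangles_eq_union hac hcb hac' hcb',
    card_union_of_disjoint disjoint_gappedTriangles]
  ring

/-- The `min` lets the statement cover the single-edge polygon `b = a + 1` as well. -/
theorem IsTriangulated.degTwoBetween_add_one [NeZero n] (hcr : NoCrossing G)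
    (hout : ContainsOuterCycle G) {a b : Fin n} (ht : IsTriangulated G a b)
    (hab : a < b) :
    degTwoBetween G a b + 1 = #(gappedTriangles G a b) + min (b.val - a.val) 2 := by
  by_cases h : a.val + 2 ≤ b.val
  · obtain ⟨c, hac, hcb, hac', hcb', htl, htr⟩ := ht.exists_apex hcr hout h
    have hl := htl.degTwoBetween_add_one hcr hout hac
    have hr := htr.degTwoBetween_add_one hcr hout hcb
    have hab' := ht.adj hcr hout hab
    have hgap : IsGappedTriangle G a c b ↔ a.val + 2 ≤ c.val ∧ c.val + 2 ≤ b.val :=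
      ⟨fun h => ⟨h.1, h.2.1⟩, fun h => ⟨h.1, h.2, hac', hcb', hab'⟩⟩
    rw [degTwoBetween_eq_add hac hcb, hcr.card_gappedTriangles_eq_add hac hcb hac' hcb',
      if_congr (ncard_neighborSet_apex_eq_two_iff hcr hout hac hcb hab' hac' hcb') rfl rfl,
      if_congr hgap rfl rfl]
    split_ifs <;> omega
  · have : degTwoBetween G a b = 0 := by
      rw [degTwoBetween, card_eq_zero, filter_eq_empty_iff]
      intro v hv
      simp only [mem_Ioo] at hv
      omega
    rw [this, gappedTriangles_eq_empty (by omega), card_empty]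
    omega
termination_by b.val - a.val

theorem isDiagonal_iff [NeZero n] {u v : Fin n} (huv : u < v) :
    IsDiagonal G u v ↔ G.Adj u v ∧ u.val + 2 ≤ v.val ∧ ¬(u.val = 0 ∧ v.val + 1 = n) := by
  have h1 : v = u + 1 ↔ v.val = u.val + 1 := by
    rw [Fin.ext_iff, Fin.val_add_one_eq_ite]
    split_ifs <;> omega
  have h2 : u = v + 1 ↔ u.val = 0 ∧ v.val + 1 = n := by
    rw [Fin.ext_iff, Fin.val_add_one_eq_ite]
    split_ifs <;> omega
  rw [IsDiagonal, ne_eq, ne_eq, h1, h2]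
  exact and_congr_right fun _ => by omega

theorem isInternalTriangle_iff [NeZero n] {p q r : Fin n} (hpq : p < q) (hqr : q < r) :
    IsInternalTriangle G p q r ↔
      IsGappedTriangle G p q r ∧ ¬(p.val = 0 ∧ r.val + 1 = n) := by
  rw [IsInternalTriangle, isDiagonal_iff hpq, isDiagonal_iff hqr, isDiagonal_iff (hpq.trans hqr),
    IsGappedTriangle]
  constructor
  · rintro ⟨⟨h1, h2, -⟩, ⟨h3, h4, -⟩, ⟨h5, -, h6⟩⟩
    exact ⟨⟨h2, h4, h1, h3, h5⟩, h6⟩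
  · rintro ⟨⟨h2, h4, h1, h3, h5⟩, h6⟩
    exact ⟨⟨h1, h2, by omega⟩, ⟨h3, h4, by omega⟩, ⟨h5, by omega, h6⟩⟩

theorem IsDiagonal.symm [NeZero n] {u v : Fin n} (h : IsDiagonal G u v) : IsDiagonal G v u :=
  ⟨h.1.symm, h.2.2, h.2.1⟩

theorem IsInternalTriangle.swap₁₂ [NeZero n] {p q r : Fin n} (h : IsInternalTriangle G p q r) :
    IsInternalTriangle G q p r :=
  ⟨IsDiagonal.symm h.1, h.2.2, h.2.1⟩

theorem IsInternalTriangle.swap₂₃ [NeZero n] {p q r : Fin n} (h : IsInternalTriangle G p q r) :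
    IsInternalTriangle G p r q :=
  ⟨h.2.2, IsDiagonal.symm h.2.1, h.1⟩

theorem IsInternalTriangle.exists_sorted [NeZero n] {x y z : Fin n}
    (h : IsInternalTriangle G x y z) :
    ∃ p q r, p < q ∧ q < r ∧ ({x, y, z} : Finset (Fin n)) = {p, q, r} ∧
      IsInternalTriangle G p q r := by
  have hxy := h.1.1.ne
  have hyz := h.2.1.1.ne
  have hxz := h.2.2.1.ne
  rcases hxy.lt_or_gt with hxy | hxy <;> rcases hyz.lt_or_gt with hyz | hyz <;>
    rcases hxz.lt_or_gt with hxz | hxz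
  · exact ⟨x, y, z, hxy, hyz, rfl, h⟩
  · exact absurd (hxy.trans hyz) hxz.not_gt
  · exact ⟨x, z, y, hxz, hyz, by ext; simp; tauto, h.swap₂₃⟩
  · exact ⟨z, x, y, hxz, hxy, by ext; simp; tauto, h.swap₂₃.swap₁₂⟩
  · exact ⟨y, x, z, hxy, hxz, by ext; simp; tauto, h.swap₁₂⟩
  · exact ⟨y, z, x, hyz, hxz, by ext; simp; tauto, h.swap₁₂.swap₂₃⟩
  · exact absurd (hyz.trans hxy) hxz.not_gt
  · exact ⟨z, y, x, hyz, hxy, by ext; simp; tauto, h.swap₂₃.swap₁₂.swap₂₃⟩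

theorem eq_of_sorted_triple_eq {p q r p' q' r' : Fin n} (hpq : p < q) (hqr : q < r)
    (hpq' : p' < q') (hqr' : q' < r')
    (h : ({p, q, r} : Finset (Fin n)) = {p', q', r'}) : p = p' ∧ q = q' ∧ r = r' := by
  have hmem (w : Fin n) : w = p ∨ w = q ∨ w = r ↔ w = p' ∨ w = q' ∨ w = r' := by
    simpa using Finset.ext_iff.1 h w
  have := hmem p
  have := hmem q
  have := hmem r
  have := hmem p'
  have := hmem q'
  have := hmem r'
  simp only [true_or, or_true, iff_true, true_iff] at *
  omega

theorem ncard_internalTriangles [NeZero n] :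
    {S : Finset (Fin n) | ∃ x y z, S = {x, y, z} ∧ IsInternalTriangle G x y z}.ncard =
      #{t ∈ gappedTriangles G 0 lastVertex | ¬(t.1 = 0 ∧ t.2.2 = lastVertex)} := by
  set T := {t ∈ gappedTriangles G 0 lastVertex | ¬(t.1 = 0 ∧ t.2.2 = lastVertex)}
  have hT {p q r : Fin n} (hpq : p < q) (hqr : q < r) :
      (p, q, r) ∈ T ↔ IsInternalTriangle G p q r := by
    simp only [T, mem_filter, mem_gappedTriangles, isInternalTriangle_iff hpq hqr,
      Fin.ext_iff, val_lastVertex, Fin.val_zero]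
    have := r.isLt
    constructor
    · rintro ⟨⟨-, -, h⟩, h'⟩
      exact ⟨h, by omega⟩
    · rintro ⟨h, h'⟩
      exact ⟨⟨Fin.zero_le p, le_lastVertex r, h⟩, by omega⟩
  have hsorted {t : Fin n × Fin n × Fin n} (ht : t ∈ T) : t.1 < t.2.1 ∧ t.2.1 < t.2.2 := by
    simp only [T, mem_filter, mem_gappedTriangles, IsGappedTriangle] at ht
    omega
  have hset : {S : Finset (Fin n) | ∃ x y z, S = {x, y, z} ∧ IsInternalTriangle G x y z} =
      (fun t : Fin n × Fin n × Fin n => ({t.1, t.2.1, t.2.2} : Finset (Fin n))) '' ↑T := by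
    ext S
    simp only [Set.mem_ofPred_eq, Set.mem_image, mem_coe]
    constructor
    · rintro ⟨x, y, z, rfl, h⟩
      obtain ⟨p, q, r, hpq, hqr, hS, h⟩ := h.exists_sorted
      exact ⟨(p, q, r), (hT hpq hqr).2 h, hS.symm⟩
    · rintro ⟨⟨p, q, r⟩, ht, rfl⟩
      obtain ⟨hpq, hqr⟩ := hsorted ht
      exact ⟨p, q, r, rfl, (hT hpq hqr).1 ht⟩
  rw [hset, Set.InjOn.ncard_image, Set.ncard_coe_finset]
  rintro ⟨p, q, r⟩ ht ⟨p', q', r'⟩ ht' h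
  obtain ⟨hpq, hqr⟩ := hsorted ht
  obtain ⟨hpq', hqr'⟩ := hsorted ht'
  obtain ⟨rfl, rfl, rfl⟩ := eq_of_sorted_triple_eq hpq hqr hpq' hqr' h
  rfl

theorem mop_internal_triangles_degree_two_count {n : ℕ} [NeZero n]
    (G : SimpleGraph (Fin n)) (hn : 4 ≤ n) (hG : IsMop G) (k : ℕ)
    (hk : {S : Finset (Fin n) | ∃ a b c : Fin n,
        S = {a, b, c} ∧ IsInternalTriangle G a b c}.ncard = k) :
    degTwoCount G = k + 2 := by
  obtain ⟨hout : ContainsOuterCycle G, hcr : NoCrossing G, hcount⟩ := hG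
  obtain ⟨c, h0c, hcl, h0c', hcl', htl, htr⟩ :=
    (isTriangulated_univ hcount).exists_apex hcr hout (by simp; omega)
  have hl := htl.degTwoBetween_add_one hcr hout h0c
  have hr := htr.degTwoBetween_add_one hcr hout hcl
  rw [← hk, ncard_internalTriangles, hcr.filter_gappedTriangles_eq_union h0c hcl h0c' hcl',
    card_union_of_disjoint disjoint_gappedTriangles, degTwoCount_eq_degTwoBetween_add (by omega),
    degTwoBetween_eq_add h0c hcl,
    if_congr (ncard_neighborSet_apex_eq_two_iff hcr hout h0c hcl
      hout.adj_lastVertex_zero.symm h0c' hcl') rfl rfl,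
    if_congr (ncard_neighborSet_zero_eq_two_iff hcr hout h0c hcl h0c' hcl') rfl rfl,
    if_congr (ncard_neighborSet_lastVertex_eq_two_iff hcr hout h0c hcl h0c' hcl') rfl rfl]
  have := Fin.val_zero n
  have := val_lastVertex (n := n)
  split_ifs <;> omega
end

section
/- If G is a maximal outerplanar graph of order n ≥ 6, then G has a diagonal {i, j} that cuts off exactly 4, 5, or 6 outer edges of G; that is, there exist adjacent vertices i and j of G with (j − i) mod n ∈ {4, 5, 6}. -/
open SimpleGraph

/-!
A noncrossing graph on `n` points in convex position has at most `2n - 3` edges: the pairs inside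
an interval `[a, b]` other than `(a, b)` split at a point `y` that no other pair straddles. Hence in
a mop every non-edge is crossed by an edge, so every edge `ij` with `i + 1 < j` spans a triangle
`ikj` with `i < k < j`. Starting from the outer edge `{0, n - 1}` and passing each time to the
longer side of this triangle, the span `j - i` decreases but stays at least `4` until it is at
most `6`.
-/

open Finset

def Noncrossing {α : Type*} [LT α] (r : α → α → Prop) : Prop :=
  ∀ a b c d : α, a < b → b < c → c < d → r a c → ¬ r b d

open Classical in
noncomputable def pairsIn (r : ℕ → ℕ → Prop) (a b : ℕ) : Finset (ℕ × ℕ) :=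
  {p ∈ Icc a b ×ˢ Icc a b | p.1 < p.2 ∧ r p.1 p.2}

section pairsIn

variable {r : ℕ → ℕ → Prop} {a b : ℕ}

theorem mem_pairsIn {p : ℕ × ℕ} :
    p ∈ pairsIn r a b ↔ a ≤ p.1 ∧ p.1 < p.2 ∧ p.2 ≤ b ∧ r p.1 p.2 := by
  simp only [pairsIn, mem_filter, mem_product, mem_Icc]
  grind

theorem pairsIn_subset_split {y : ℕ}
    (hy : ∀ p ∈ pairsIn r a b, p = (a, b) ∨ p.2 ≤ y ∨ y ≤ p.1) :
    pairsIn r a b ⊆ insert (a, b) (pairsIn r a y ∪ pairsIn r y b) := by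
  intro p hp
  simp only [mem_insert, mem_union, mem_pairsIn] at hp ⊢
  rcases hy p (mem_pairsIn.2 hp) with h | h | h
  · exact .inl h
  · exact .inr (.inl ⟨hp.1, hp.2.1, h, hp.2.2.2⟩)
  · exact .inr (.inr ⟨h, hp.2.1, hp.2.2.1, hp.2.2.2⟩)

/-- Take for `y` the farthest partner of `a` before `b` (or `a + 1`): a pair of `r` straddling `y`
either starts at `a`, and then ends at `b`, or it crosses the pair `(a, y)`. -/
theorem exists_split_point (hr : Noncrossing r) (hab : a + 1 < b) :
    ∃ y, a < y ∧ y < b ∧ ∀ p ∈ pairsIn r a b, p = (a, b) ∨ p.2 ≤ y ∨ y ≤ p.1 := by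
  classical
  set S : Finset ℕ := {z ∈ Icc (a + 1) (b - 1) | z = a + 1 ∨ r a z}
  have hS : a + 1 ∈ S := by simp [S]; omega
  obtain ⟨y, hyS, hmax⟩ : ∃ y ∈ S, ∀ z ∈ S, z ≤ y :=
    ⟨S.max' ⟨_, hS⟩, S.max'_mem _, fun z hz => S.le_max' z hz⟩
  simp only [S, mem_filter, mem_Icc] at hyS
  refine ⟨y, by omega, by omega, fun ⟨x, z⟩ hp => ?_⟩
  rw [mem_pairsIn] at hp
  by_contra! h
  obtain ⟨hax, hxz, hzb, hxz'⟩ := hp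
  obtain ⟨hne, hzy, hxy⟩ := h
  rcases hax.eq_or_lt with rfl | hax
  · have hz : z ∈ S := by simp only [S, mem_filter, mem_Icc]; grind
    have := hmax z hz
    omega
  · rcases hyS.2 with rfl | hay
    · omega
    · exact hr a x y z hax hxy hzy hay hxz'

theorem card_pairsIn_le (hr : Noncrossing r) (a b : ℕ) : #(pairsIn r a b) ≤ 2 * (b - a) - 1 := by
  induction h : b - a using Nat.strong_induction_on generalizing a b with
  | _ d ih =>
  subst h
  rcases (show b ≤ a ∨ b = a + 1 ∨ a + 1 < b by omega) with hba | rfl | hab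
  · suffices pairsIn r a b = ∅ by simp [this]
    ext p
    simp only [mem_pairsIn, notMem_empty, iff_false]
    omega
  · have : pairsIn r a (a + 1) ⊆ {(a, a + 1)} := by
      intro p hp
      rw [mem_pairsIn] at hp
      rw [mem_singleton, Prod.ext_iff]
      omega
    have := card_le_card this
    simp only [card_singleton] at this
    omega
  · obtain ⟨y, hay, hyb, hy⟩ := exists_split_point hr hab
    have h1 := ih (y - a) (by omega) a y rfl
    have h2 := ih (b - y) (by omega) y b rfl
    calc #(pairsIn r a b) ≤ #(insert (a, b) (pairsIn r a y ∪ pairsIn r y b)) :=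
          card_le_card (pairsIn_subset_split hy)
      _ ≤ #(pairsIn r a y ∪ pairsIn r y b) + 1 := card_insert_le _ _
      _ ≤ #(pairsIn r a y) + #(pairsIn r y b) + 1 := by grw [card_union_le]
      _ ≤ 2 * (b - a) - 1 := by omega

end pairsIn

theorem ncard_edgeSet_le_of_noncrossing {n : ℕ} (H : SimpleGraph (Fin n))
    (hH : Noncrossing H.Adj) : H.edgeSet.ncard ≤ 2 * n - 3 := by
  set r : ℕ → ℕ → Prop := fun x y => ∃ a b : Fin n, H.Adj a b ∧ a.val = x ∧ b.val = y
  have hr : Noncrossing r := by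
    rintro _ _ _ _ h₁ h₂ h₃ ⟨a, c, hac, rfl, rfl⟩ ⟨b, d, hbd, rfl, rfl⟩
    exact hH a b c d h₁ h₂ h₃ hac hbd
  calc H.edgeSet.ncard ≤ (pairsIn r 0 (n - 1) : Set (ℕ × ℕ)).ncard := by
        refine Set.ncard_le_ncard_of_injOn (fun e => (e.inf.val, e.sup.val)) ?_ ?_
        · intro e he
          induction e with | _ x y
          rw [SimpleGraph.mem_edgeSet] at he
          wlog hxy : x < y generalizing x y
          · rw [Sym2.eq_swap]
            exact this y x he.symm (he.ne.lt_or_gt.resolve_left hxy)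
          simp only [Sym2.inf_mk, Sym2.sup_mk, inf_of_le_left hxy.le, sup_of_le_right hxy.le,
            mem_coe, mem_pairsIn]
          exact ⟨Nat.zero_le _, hxy, by omega, x, y, he, rfl, rfl⟩
        · intro e _ f _ hef
          exact Sym2.inf_eq_inf_and_sup_eq_sup.1
            ⟨Fin.ext (congrArg Prod.fst hef), Fin.ext (congrArg Prod.snd hef)⟩
    _ = #(pairsIn r 0 (n - 1)) := Set.ncard_coe_finset _
    _ ≤ 2 * n - 3 := by have := card_pairsIn_le hr 0 (n - 1); omega

namespace IsMop

variable {n : ℕ} [NeZero n] {G : SimpleGraph (Fin n)}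

theorem noncrossing (hG : IsMop G) : Noncrossing G.Adj := hG.2.1

/-- A chord crossed by no edge could be added without creating a crossing, exceeding the bound
`2n - 3` on noncrossing graphs. -/
theorem exists_crossing (hG : IsMop G) {u v : Fin n} (huv : u < v) (h : ¬G.Adj u v) :
    ∃ a b, G.Adj a b ∧ u < a ∧ a < v ∧ (b < u ∨ v < b) := by
  by_contra! hno
  have hH : Noncrossing (G ⊔ SimpleGraph.edge u v).Adj := by
    intro a b c d hab hbc hcd hac hbd
    simp only [SimpleGraph.sup_adj, SimpleGraph.edge_adj] at hac hbd
    -- if one of the two edges is the new chord `uv`, the other one is an edge of `G` crossing it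
    rcases hac with hac | ⟨⟨rfl, rfl⟩ | ⟨rfl, rfl⟩, -⟩ <;>
      rcases hbd with hbd | ⟨⟨rfl, rfl⟩ | ⟨rfl, rfl⟩, -⟩
    all_goals first
      | exact hG.noncrossing a b c d hab hbc hcd hac hbd
      | exact absurd (hno c a hac.symm hbc hcd).1 (not_le.2 hab)
      | exact absurd (hno b d hbd hab hbc).2 (not_le.2 hcd)
      | order
  have hcard : (G ⊔ SimpleGraph.edge u v).edgeSet.ncard = G.edgeSet.ncard + 1 := by
    rw [SimpleGraph.edgeSet_sup, SimpleGraph.edgeSet_edge_of_ne huv.ne, Set.union_singleton,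
      Set.ncard_insert_of_notMem (G.mem_edgeSet.not.2 h)]
  have := ncard_edgeSet_le_of_noncrossing _ hH
  have := hG.2.2
  have := v.isLt
  omega

/-- Take for `k` the neighbour of `i` inside `(i, j)` closest to `j`; an edge crossing `kj`
would cross `ij` or `ik`, or reach `i` beyond `k`. -/
theorem exists_triangle (hG : IsMop G) {i j : Fin n} (hij : G.Adj i j) (h : i.val + 1 < j.val) :
    ∃ k, i < k ∧ k < j ∧ G.Adj i k ∧ G.Adj k j := by
  classical
  have hi : (i + 1).val = i.val + 1 := Fin.val_add_one_of_lt' (by omega)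
  obtain ⟨k, hk, hmax⟩ := ({k ∈ Ioo i j | G.Adj i k}).exists_max_image id
    ⟨i + 1, by simp only [mem_filter, mem_Ioo]; exact ⟨⟨by omega, by omega⟩, hG.1 i⟩⟩
  simp only [mem_filter, mem_Ioo] at hk hmax
  obtain ⟨⟨hik, hkj⟩, hadj⟩ := hk
  refine ⟨k, hik, hkj, hadj, ?_⟩
  by_contra hkj'
  obtain ⟨a, b, hab, hka, haj, hb⟩ := hG.exists_crossing hkj hkj'
  rcases hb with hbk | hjb
  · rcases lt_trichotomy b i with hbi | rfl | hib
    · exact hG.noncrossing b i a j hbi (hik.trans hka) haj hab.symm hij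
    · exact absurd (hmax a ⟨⟨hik.trans hka, haj⟩, hab.symm⟩) (not_le.2 hka)
    · exact hG.noncrossing i b k a hib hbk hka hadj hab.symm
  · exact hG.noncrossing i a j b (hik.trans hka) haj hjb hij hab

theorem exists_adj_sub_val_eq_four_or_five_or_six (hG : IsMop G) {i j : Fin n} (hij : G.Adj i j) (hlt : i < j)
    (h4 : 4 ≤ j.val - i.val) :
    ∃ i j : Fin n, G.Adj i j ∧ ((j - i).val = 4 ∨ (j - i).val = 5 ∨ (j - i).val = 6) := by
  induction hd : j.val - i.val using Nat.strong_induction_on generalizing i j with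
  | _ d ih =>
  subst hd
  by_cases h6 : j.val - i.val ≤ 6
  · exact ⟨i, j, hij, by rw [Fin.coe_sub_iff_le.2 hlt.le]; omega⟩
  obtain ⟨k, hik, hkj, hadj_ik, hadj_kj⟩ := hG.exists_triangle hij (by omega)
  by_cases hk : 4 ≤ k.val - i.val
  · exact ih _ (by omega) hadj_ik hik hk rfl
  · exact ih _ (by omega) hadj_kj hkj (by omega) rfl

end IsMop

theorem mop_exists_partition_diagonal {n : ℕ} [NeZero n] (G : SimpleGraph (Fin n))
    (hn : 6 ≤ n) (hG : IsMop G) :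
    ∃ i j : Fin n, G.Adj i j ∧
      ((j - i).val = 4 ∨ (j - i).val = 5 ∨ (j - i).val = 6) := by
  obtain ⟨m, rfl⟩ : ∃ m, n = m + 1 := ⟨n - 1, by omega⟩
  have hadj : G.Adj 0 (Fin.last m) := by simpa using (hG.1 (Fin.last m)).symm
  exact hG.exists_adj_sub_val_eq_four_or_five_or_six hadj (Fin.lt_def.2 (by simp; omega)) (by simp; omega)
end

section
/- If G is a maximal outerplanar graph of order 9 and the vertex 1 has degree 2 in G, then the set {0, 5} is a disjunctive dominating set of G. -/
open SimpleGraph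

/-! ### Auxiliary lemmas -/

/-- A pairwise non-crossing family of intervals `[p.1, p.2] ⊆ [0, M]` with
`p.2 - p.1 ≥ 2` has at most `M - 1` members. -/
lemma laminar_bound : ∀ (M : ℕ) (F : Finset (ℕ × ℕ)),
    (∀ p ∈ F, p.1 + 2 ≤ p.2) → (∀ p ∈ F, p.2 ≤ M) →
    (∀ p ∈ F, ∀ q ∈ F, ¬(p.1 < q.1 ∧ q.1 < p.2 ∧ p.2 < q.2)) →
    F.card ≤ M - 1 := by
  intro M
  induction M using Nat.strong_induction_on with
  | _ M IH =>
    intro F H1 H2 H3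
    rcases F.eq_empty_or_nonempty with hF | hF
    · simp [hF]
    obtain ⟨p0, hp0, hmin⟩ := F.exists_min_image (fun p => p.2 - p.1) hF
    obtain ⟨a, b⟩ := p0
    have hab : a + 2 ≤ b := H1 _ hp0
    have hbM : b ≤ M := H2 _ hp0
    -- no other chord has an endpoint strictly inside (a,b)
    have hout : ∀ p ∈ F, p ≠ (a, b) →
        (p.1 ≤ a ∨ b ≤ p.1) ∧ (p.2 ≤ a ∨ b ≤ p.2) := by
      intro p hp hne
      have h1p := H1 p hp
      have hminp := hmin p hp
      have hc1 := H3 (a, b) hp0 p hp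
      have hc2 := H3 p hp (a, b) hp0
      simp only [not_and, not_lt] at hc1 hc2
      simp only at hminp
      constructor
      · by_contra h
        push_neg at h
        have hb : p.2 ≤ b := hc1 h.1 h.2
        omega
      · by_contra h
        push_neg at h
        have hb : a ≤ p.1 := by
          by_contra h'
          push_neg at h'
          have := hc2 h' h.1
          omega
        omega
    set k := b - a with hk
    set σ : ℕ → ℕ := fun x => if b ≤ x then x - (k - 1) else x with hσ
    have hσmono : ∀ x y : ℕ, (x ≤ a ∨ b ≤ x) → (y ≤ a ∨ b ≤ y) → (σ x < σ y ↔ x < y) := by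
      intro x y hx hy
      simp only [hσ]
      split_ifs <;> omega
    have hσinj : ∀ x y : ℕ, (x ≤ a ∨ b ≤ x) → (y ≤ a ∨ b ≤ y) → σ x = σ y → x = y := by
      intro x y hx hy
      simp only [hσ]
      split_ifs <;> omega
    set F' := (F.erase (a, b)).image (fun p => (σ p.1, σ p.2)) with hF'
    have hdom : ∀ p ∈ F.erase (a, b), (p.1 ≤ a ∨ b ≤ p.1) ∧ (p.2 ≤ a ∨ b ≤ p.2) := by
      intro p hp
      exact hout p (Finset.mem_of_mem_erase hp) (Finset.ne_of_mem_erase hp)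
    have hcard' : F'.card = F.card - 1 := by
      rw [hF', Finset.card_image_of_injOn, Finset.card_erase_of_mem hp0]
      intro p hp q hq hpq
      have hdp := hdom p hp
      have hdq := hdom q hq
      have h1 : σ p.1 = σ q.1 := congrArg Prod.fst hpq
      have h2 : σ p.2 = σ q.2 := congrArg Prod.snd hpq
      have := hσinj _ _ hdp.1 hdq.1 h1
      have := hσinj _ _ hdp.2 hdq.2 h2
      exact Prod.ext ‹p.1 = q.1› ‹p.2 = q.2›
    have hne' : ∀ p ∈ F.erase (a, b), p.1 ≠ a ∨ p.2 ≠ b := by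
      intro p hp
      have := Finset.ne_of_mem_erase hp
      by_contra h
      push_neg at h
      exact this (Prod.ext h.1 h.2)
    have H1' : ∀ p ∈ F', p.1 + 2 ≤ p.2 := by
      intro p hp
      rw [hF', Finset.mem_image] at hp
      obtain ⟨q, hq, rfl⟩ := hp
      have hd := hdom q hq
      have h1q := H1 q (Finset.mem_of_mem_erase hq)
      have hne2 := hne' q hq
      simp only [hσ]
      split_ifs <;> omega
    have H2' : ∀ p ∈ F', p.2 ≤ M - (k - 1) := by
      intro p hp
      rw [hF', Finset.mem_image] at hp
      obtain ⟨q, hq, rfl⟩ := hp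
      have hd := hdom q hq
      have h2q := H2 q (Finset.mem_of_mem_erase hq)
      simp only [hσ]
      split_ifs <;> omega
    have H3' : ∀ p ∈ F', ∀ q ∈ F', ¬(p.1 < q.1 ∧ q.1 < p.2 ∧ p.2 < q.2) := by
      intro p hp q hq
      rw [hF', Finset.mem_image] at hp hq
      obtain ⟨p', hp', rfl⟩ := hp
      obtain ⟨q', hq', rfl⟩ := hq
      have hdp := hdom p' hp'
      have hdq := hdom q' hq'
      have horig := H3 p' (Finset.mem_of_mem_erase hp') q' (Finset.mem_of_mem_erase hq')
      rw [hσmono _ _ hdp.1 hdq.1, hσmono _ _ hdq.1 hdp.2, hσmono _ _ hdp.2 hdq.2]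
      exact horig
    have hlt : M - (k - 1) < M := by omega
    have := IH (M - (k - 1)) hlt F' H1' H2' H3'
    omega

/-- Circular relabeling `2,3,…,8,0 ↦ 0,1,…,6,7` (vertex `1` is never used). -/
def rho (v : Fin 9) : ℕ := if 2 ≤ v.val then v.val - 2 else v.val + 7

def pairF (x y : Fin 9) : ℕ × ℕ := (min (rho x) (rho y), max (rho x) (rho y))

lemma pairF_comm (x y : Fin 9) : pairF x y = pairF y x := by
  simp [pairF, min_comm, max_comm]

lemma Bspan : ∀ x y : Fin 9, x ≠ y → x ≠ 1 → y ≠ 1 → y ≠ x + 1 → x ≠ y + 1 →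
    ¬(x = 0 ∧ y = 2) → ¬(x = 2 ∧ y = 0) →
    (pairF x y).1 + 2 ≤ (pairF x y).2 ∧ (pairF x y).2 ≤ 7 ∧ pairF x y ≠ (0, 7) := by
  decide

lemma Binj : ∀ x y x' y' : Fin 9, x < y → x' < y' →
    pairF x y = pairF x' y' → x = x' ∧ y = y' := by
  decide

lemma Bcross : ∀ x y z w : Fin 9, x < y → z < w →
    ((pairF x y).1 < (pairF z w).1 ∧ (pairF z w).1 < (pairF x y).2 ∧
      (pairF x y).2 < (pairF z w).2) →
    ((x < z ∧ z < y ∧ y < w) ∨ (z < x ∧ x < w ∧ w < y)) := by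
  decide

lemma outer_inj : ∀ a b : Fin 9, s(a, a + 1) = s(b, b + 1) → a = b := by
  decide

/-- In a mop on nine vertices in which vertex `1` has degree two,
`{0, 2}` must be an edge. -/
lemma adj02 (G : SimpleGraph (Fin 9)) (hG : IsMop G)
    (h1 : (G.neighborSet (1 : Fin 9)).ncard = 2) : G.Adj 0 2 := by
  classical
  -- neighbors of 1 are exactly {0, 2}
  have hsub : ({0, 2} : Set (Fin 9)) ⊆ G.neighborSet 1 := by
    intro v hv
    rcases hv with rfl | hv
    · exact (hG.1 0).symm
    · rcases hv with rfl
      exact hG.1 1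
  have heq : ({0, 2} : Set (Fin 9)) = G.neighborSet 1 := by
    apply Set.eq_of_subset_of_ncard_le hsub
    rw [h1, Set.ncard_pair (by decide : (0 : Fin 9) ≠ 2)]
  have hN : ∀ v : Fin 9, G.Adj 1 v → v = 0 ∨ v = 2 := by
    intro v hv
    have : v ∈ ({0, 2} : Set (Fin 9)) := by rw [heq]; exact hv
    simpa using this
  by_contra h02
  -- edge finset
  have hfin : G.edgeSet.Finite := Set.toFinite _
  set E : Finset (Sym2 (Fin 9)) := hfin.toFinset with hE
  have hEcard : E.card = 15 := by
    have := hG.2.2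
    rw [Set.ncard_eq_toFinset_card _ hfin] at this
    rw [hE]
    exact this
  set Outer : Finset (Sym2 (Fin 9)) :=
    Finset.image (fun i : Fin 9 => s(i, i + 1)) Finset.univ with hOuter
  have hOcard : Outer.card = 9 := by
    rw [hOuter, Finset.card_image_of_injective _ (fun a b h => outer_inj a b h)]
    simp
  have hOE : Outer ⊆ E := by
    intro e he
    rw [hOuter, Finset.mem_image] at he
    obtain ⟨i, _, rfl⟩ := he
    rw [hE, Set.Finite.mem_toFinset, mem_edgeSet]
    exact hG.1 i
  set Diag := E \ Outer with hDiag
  have hDcard : Diag.card = 6 := by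
    rw [hDiag, Finset.card_sdiff_of_subset hOE, hEcard, hOcard]
  -- sorted representation of diagonals
  have rep : ∀ e ∈ Diag, ∃ x y : Fin 9, x < y ∧ e = s(x, y) ∧ G.Adj x y ∧
      x ≠ 1 ∧ y ≠ 1 ∧ y ≠ x + 1 ∧ x ≠ y + 1 ∧ ¬(x = 0 ∧ y = 2) ∧ ¬(x = 2 ∧ y = 0) := by
    intro e he
    rw [hDiag, Finset.mem_sdiff] at he
    obtain ⟨heE, heO⟩ := he
    rw [hE, Set.Finite.mem_toFinset] at heE
    have hnotouter : ∀ i : Fin 9, e ≠ s(i, i + 1) := by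
      intro i hi
      exact heO (by rw [hOuter, Finset.mem_image]; exact ⟨i, Finset.mem_univ i, hi.symm⟩)
    clear heO
    induction e with
    | h x y =>
      rw [mem_edgeSet] at heE
      have hxy : x ≠ y := heE.ne
      have hne1 : ∀ z w : Fin 9, s(z, w) = s(x, y) → G.Adj z w → z ≠ 1 := by
        intro z w hzw hadj hz
        subst hz
        rcases hN w hadj with rfl | rfl
        · exact hnotouter 0 (by rw [← hzw]; rw [Sym2.eq_swap]; rfl)
        · exact hnotouter 1 (by rw [← hzw]; rfl)
      have hx1 : x ≠ 1 := hne1 x y rfl heE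
      have hy1 : y ≠ 1 := hne1 y x (Sym2.eq_swap) heE.symm
      have hno02 : ¬(x = 0 ∧ y = 2) := by rintro ⟨rfl, rfl⟩; exact h02 heE
      have hno20 : ¬(x = 2 ∧ y = 0) := by rintro ⟨rfl, rfl⟩; exact h02 heE.symm
      have hnadd1 : y ≠ x + 1 := by
        intro h; exact hnotouter x (by rw [h])
      have hnadd2 : x ≠ y + 1 := by
        intro h; exact hnotouter y (by rw [Sym2.eq_swap, h])
      rcases lt_or_gt_of_ne hxy with hlt | hgt
      · exact ⟨x, y, hlt, rfl, heE, hx1, hy1, hnadd1, hnadd2, hno02, hno20⟩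
      · exact ⟨y, x, hgt, Sym2.eq_swap.symm, heE.symm, hy1, hx1, hnadd2, hnadd1,
          fun h => hno20 ⟨h.2, h.1⟩, fun h => hno02 ⟨h.2, h.1⟩⟩
  -- map diagonals to ℕ × ℕ intervals
  set f : Sym2 (Fin 9) → ℕ × ℕ := Sym2.lift ⟨pairF, fun x y => pairF_comm x y⟩ with hf
  have hfmk : ∀ x y : Fin 9, f s(x, y) = pairF x y := fun x y => rfl
  set F' := insert ((0, 7) : ℕ × ℕ) (Diag.image f) with hF'
  have himg : ∀ p ∈ Diag.image f, p.1 + 2 ≤ p.2 ∧ p.2 ≤ 7 ∧ p ≠ (0, 7) := by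
    intro p hp
    rw [Finset.mem_image] at hp
    obtain ⟨e, he, rfl⟩ := hp
    obtain ⟨x, y, hlt, rfl, hadj, hx1, hy1, ha1, ha2, h02', h20'⟩ := rep e he
    rw [hfmk]
    exact Bspan x y hlt.ne hx1 hy1 ha1 ha2 h02' h20'
  have hnotmem : ((0, 7) : ℕ × ℕ) ∉ Diag.image f := fun h => (himg _ h).2.2 rfl
  have himgcard : (Diag.image f).card = 6 := by
    rw [Finset.card_image_of_injOn, hDcard]
    intro e he e' he' hee
    obtain ⟨x, y, hlt, rfl, _, _, _, _, _, _, _⟩ := rep e he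
    obtain ⟨x', y', hlt', rfl, _, _, _, _, _, _, _⟩ := rep e' he'
    rw [hfmk, hfmk] at hee
    obtain ⟨rfl, rfl⟩ := Binj x y x' y' hlt hlt' hee
    rfl
  have hF'card : F'.card = 7 := by
    rw [hF', Finset.card_insert_of_notMem hnotmem, himgcard]
  have H1 : ∀ p ∈ F', p.1 + 2 ≤ p.2 := by
    intro p hp
    rw [hF', Finset.mem_insert] at hp
    rcases hp with rfl | hp
    · norm_num
    · exact (himg p hp).1
  have H2 : ∀ p ∈ F', p.2 ≤ 7 := by
    intro p hp
    rw [hF', Finset.mem_insert] at hp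
    rcases hp with rfl | hp
    · norm_num
    · exact (himg p hp).2.1
  have H3 : ∀ p ∈ F', ∀ q ∈ F', ¬(p.1 < q.1 ∧ q.1 < p.2 ∧ p.2 < q.2) := by
    intro p hp q hq
    rw [hF', Finset.mem_insert] at hp hq
    rcases hq with rfl | hq
    · rintro ⟨h, -, -⟩; exact absurd h (by omega)
    · rcases hp with rfl | hp
      · rintro ⟨-, -, h⟩; exact absurd h (by have := (himg q hq).2.1; omega)
      · rw [Finset.mem_image] at hp hq
        obtain ⟨e, he, rfl⟩ := hp
        obtain ⟨e', he', rfl⟩ := hq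
        obtain ⟨x, y, hlt, rfl, hadj, _, _, _, _, _, _⟩ := rep e he
        obtain ⟨z, w, hlt', rfl, hadj', _, _, _, _, _, _⟩ := rep e' he'
        rw [hfmk, hfmk]
        intro hcr
        rcases Bcross x y z w hlt hlt' hcr with ⟨h1', h2', h3'⟩ | ⟨h1', h2', h3'⟩
        · exact hG.2.1 x z y w h1' h2' h3' hadj hadj'
        · exact hG.2.1 z x w y h1' h2' h3' hadj' hadj
  have := laminar_bound 7 F' H1 H2 H3
  omega

lemma dist_two {V : Type*} (G : SimpleGraph V) {u v x : V}
    (h1 : G.Adj u x) (h2 : G.Adj x v) (hne : u ≠ v) (hna : ¬ G.Adj u v) :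
    G.dist u v = 2 := by
  have hle : G.dist u v ≤ 2 := by
    have := SimpleGraph.dist_le (h1.toWalk.append h2.toWalk)
    simpa [SimpleGraph.Walk.length_append] using this
  have hr : G.Reachable u v := ⟨h1.toWalk.append h2.toWalk⟩
  have h0 : 0 < G.dist u v := hr.pos_dist_of_ne hne
  have hone : G.dist u v ≠ 1 := by
    intro h
    exact hna ((SimpleGraph.dist_eq_one_iff_adj).1 h)
  omega

theorem mop_nine_degree_two_disjDom (G : SimpleGraph (Fin 9)) (hG : IsMop G)
    (h1 : (G.neighborSet (1 : Fin 9)).ncard = 2) :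
    IsDisjDomSet G {0, 5} := by
  have h02 : G.Adj 0 2 := adj02 G hG h1
  have e01 : G.Adj 0 1 := by have := hG.1 0; rwa [(by decide : (0 : Fin 9) + 1 = 1)] at this
  have e23 : G.Adj 2 3 := by have := hG.1 2; rwa [(by decide : (2 : Fin 9) + 1 = 3)] at this
  have e34 : G.Adj 3 4 := by have := hG.1 3; rwa [(by decide : (3 : Fin 9) + 1 = 4)] at this
  have e45 : G.Adj 4 5 := by have := hG.1 4; rwa [(by decide : (4 : Fin 9) + 1 = 5)] at this
  have e56 : G.Adj 5 6 := by have := hG.1 5; rwa [(by decide : (5 : Fin 9) + 1 = 6)] at this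
  have e67 : G.Adj 6 7 := by have := hG.1 6; rwa [(by decide : (6 : Fin 9) + 1 = 7)] at this
  have e78 : G.Adj 7 8 := by have := hG.1 7; rwa [(by decide : (7 : Fin 9) + 1 = 8)] at this
  have e80 : G.Adj 8 0 := by have := hG.1 8; rwa [(by decide : (8 : Fin 9) + 1 = 0)] at this
  intro v hv
  fin_cases v
  · exact absurd (by simp) hv
  · exact Or.inl ⟨0, by simp, e01⟩
  · exact Or.inl ⟨0, by simp, h02⟩
  · by_cases h03 : G.Adj 0 3
    · exact Or.inl ⟨0, by simp, h03⟩
    by_cases h53 : G.Adj 5 3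
    · exact Or.inl ⟨5, by simp, h53⟩
    exact Or.inr ⟨0, by simp, 5, by simp, by decide,
      dist_two G h02 e23 (by decide) h03,
      dist_two G e45.symm e34.symm (by decide) h53⟩
  · exact Or.inl ⟨5, by simp, e45.symm⟩
  · exact absurd (by simp) hv
  · exact Or.inl ⟨5, by simp, e56⟩
  · by_cases h07 : G.Adj 0 7
    · exact Or.inl ⟨0, by simp, h07⟩
    by_cases h57 : G.Adj 5 7
    · exact Or.inl ⟨5, by simp, h57⟩
    exact Or.inr ⟨0, by simp, 5, by simp, by decide,
      dist_two G e80.symm e78.symm (by decide) h07,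
      dist_two G e56 e67 (by decide) h57⟩
  · exact Or.inl ⟨0, by simp, e80.symm⟩
end
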